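/- arXiv:0806.0479 — 3 statements merged into one kernel-verified Lean document; each statement's English description precedes it below -/
import Mathlib

section
/- (Generalized Bayer–Stillman criterion.) Let (f_α)_{α∈Ω} be a family of nonzero elements of S indexed by a well-ordered set Ω. If the family of leading monomials (lm(f_α))_{α∈Ω} is a regular sequence on S, then (f_α)_{α∈Ω} is a regular sequence on S and the set {f_α : α ∈ Ω} is a Gröbner base for the ideal it generates. -/
/-!
Regularity of the monomials `x^{m α}` forces the exponents `m α` to have pairwise disjoint
supports. For leading monomials that are pairwise coprime, the only syzygies among leading terms
are the Koszul ones: `lc(f β) x^{M - m α} f α - lc(f α) x^{M - m β} f β` only involves monomials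
below `M`. Hence an element of the span of the multiples `x^u f α` of leading monomial `≼ M` whose
coefficient at `M` vanishes is already a combination of multiples of leading monomial `≺ M`, and
well-founded induction on `M` shows that the leading monomial of every element of `(f α : α ∈ A)`
is divisible by some `m α` with `α ∈ A`. This is the Gröbner property, and it gives regularity:
if `h f α ∈ (f β : β < α)`, then some `m β` divides `lm h + m α`, hence `lm h` by coprimality,
and one subtracts a multiple of `f β` from `h` and inducts on `lm h`.
-/

open MvPolynomial

noncomputable section

/-- `r` is a monomial order on the monomials (finitely supported exponent vectors):
a well-order compatible with multiplication.  Here `r a b` means `x^a < x^b`. -/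
def IsMonomialOrder {σ : Type*} (r : (σ →₀ ℕ) → (σ →₀ ℕ) → Prop) : Prop :=
  IsWellOrder (σ →₀ ℕ) r ∧ ∀ a b c : σ →₀ ℕ, r a b → r (c + a) (c + b)

/-- `m` is the leading monomial of the polynomial `f` with respect to the order `r`. -/
def IsLM {σ k : Type*} [CommSemiring k] (r : (σ →₀ ℕ) → (σ →₀ ℕ) → Prop)
    (f : MvPolynomial σ k) (m : σ →₀ ℕ) : Prop :=
  m ∈ f.support ∧ ∀ m' ∈ f.support, m' ≠ m → r m' m

/-- `t` is the leading term of `f` with respect to `r`. -/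
def IsLT {σ k : Type*} [CommSemiring k] (r : (σ →₀ ℕ) → (σ →₀ ℕ) → Prop)
    (f t : MvPolynomial σ k) : Prop :=
  ∃ m, IsLM r f m ∧ t = monomial m (f.coeff m)

/-- The initial ideal of `I`: the ideal generated by the leading terms of nonzero elements. -/
def initialIdeal {σ k : Type*} [CommSemiring k] (r : (σ →₀ ℕ) → (σ →₀ ℕ) → Prop)
    (I : Ideal (MvPolynomial σ k)) : Ideal (MvPolynomial σ k) :=
  Ideal.span {t | ∃ f ∈ I, f ≠ 0 ∧ IsLT r f t}

/-- The set of leading monomials (as polynomials) of the nonzero members of `G`: `in(G)`. -/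
def lmMonomials {σ k : Type*} [CommSemiring k] (r : (σ →₀ ℕ) → (σ →₀ ℕ) → Prop)
    (G : Set (MvPolynomial σ k)) : Set (MvPolynomial σ k) :=
  {t | ∃ m, (∃ g ∈ G, g ≠ 0 ∧ IsLM r g m) ∧ t = monomial m 1}

/-- `G ⊆ I` is a Gröbner base for `I`: the leading monomials of members of `G`
generate the initial ideal of `I`. -/
def IsGroebnerBasis {σ k : Type*} [CommSemiring k] (r : (σ →₀ ℕ) → (σ →₀ ℕ) → Prop)
    (G : Set (MvPolynomial σ k)) (I : Ideal (MvPolynomial σ k)) : Prop :=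
  G ⊆ ↑I ∧ Ideal.span (lmMonomials r G) = initialIdeal r I

/-- `S⟨n⟩ = k[x₀, …, xₙ₋₁]`, the subalgebra of polynomials in the first `n` variables. -/
def Sn (k : Type*) [CommSemiring k] (n : ℕ) : Subalgebra k (MvPolynomial ℕ k) :=
  MvPolynomial.supported k {i | i < n}

/-- The initial ideal of an ideal `J` of `S⟨n⟩`, computed inside `S⟨n⟩`
(with the restricted monomial order). -/
def initialIdealIn {k : Type*} [CommSemiring k] (r : (ℕ →₀ ℕ) → (ℕ →₀ ℕ) → Prop)
    (n : ℕ) (J : Ideal ↥(Sn k n)) : Ideal ↥(Sn k n) :=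
  Ideal.span {t | ∃ f ∈ J, f ≠ 0 ∧ IsLT r (f : MvPolynomial ℕ k) (t : MvPolynomial ℕ k)}

/-- The ideal `I ∩ S⟨n⟩` of `S⟨n⟩`. -/
def interIdeal {k : Type*} [CommSemiring k] (I : Ideal (MvPolynomial ℕ k)) (n : ℕ) :
    Ideal ↥(Sn k n) :=
  Ideal.comap (Sn k n).subtype I

/-- A subset `G` of `S` lying in `S⟨n⟩` is a Gröbner base for the ideal `J` of `S⟨n⟩`. -/
def IsGroebnerBasisIn {k : Type*} [CommSemiring k] (r : (ℕ →₀ ℕ) → (ℕ →₀ ℕ) → Prop)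
    (n : ℕ) (G : Set (MvPolynomial ℕ k)) (J : Ideal ↥(Sn k n)) : Prop :=
  (∀ g ∈ G, ∃ hg : g ∈ Sn k n, (⟨g, hg⟩ : ↥(Sn k n)) ∈ J) ∧
  Ideal.span {t : ↥(Sn k n) | ∃ m, (∃ g ∈ G, g ≠ 0 ∧ IsLM r g m) ∧
      (t : MvPolynomial ℕ k) = monomial m 1} = initialIdealIn r n J

/-- `f'` is a remainder of `f` on division by `G` with respect to the order `r`. -/
def IsRemainder {σ k : Type*} [CommSemiring k] (r : (σ →₀ ℕ) → (σ →₀ ℕ) → Prop)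
    (G : Set (MvPolynomial σ k)) (f f' : MvPolynomial σ k) : Prop :=
  (∃ (s : ℕ) (g q : Fin s → MvPolynomial σ k),
    (∀ i, g i ∈ G) ∧
    f = (∑ i, q i * g i) + f' ∧
    ∀ i, q i * g i ≠ 0 → ∀ m m', IsLM r (q i * g i) m → IsLM r f m' → m = m' ∨ r m m') ∧
  ∀ m ∈ f'.support, (monomial m 1 : MvPolynomial σ k) ∉ Ideal.span (lmMonomials r G)

/-- `G` is a reduced Gröbner base for `I`: every member is monic and no leading monomial
of a member divides any term of another member. -/
def IsReducedGB {σ k : Type*} [CommSemiring k] (r : (σ →₀ ℕ) → (σ →₀ ℕ) → Prop)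
    (G : Set (MvPolynomial σ k)) (I : Ideal (MvPolynomial σ k)) : Prop :=
  IsGroebnerBasis r G I ∧
  (∀ g ∈ G, ∃ m, IsLM r g m ∧ MvPolynomial.coeff m g = 1) ∧
  (∀ g ∈ G, ∀ h ∈ G, g ≠ h → ∀ m, IsLM r g m → ∀ m' ∈ h.support, ¬ m ≤ m')

/-- A regular sequence indexed by an ordered set `(Ω, lt)`. -/
def IsRegularSeq {R : Type*} [CommRing R] {Ω : Type*} (lt : Ω → Ω → Prop) (f : Ω → R) : Prop :=
  Ideal.span (Set.range f) ≠ ⊤ ∧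
  ∀ α : Ω, ∀ h : R, h * f α ∈ Ideal.span (f '' {β | lt β α}) →
    h ∈ Ideal.span (f '' {β | lt β α})

/-- The FR-condition: every finite strictly increasing subfamily is a regular sequence
in this order. -/
def SatisfiesFR {R : Type*} [CommRing R] {Ω : Type*} (lt : Ω → Ω → Prop) (f : Ω → R) : Prop :=
  ∀ (n : ℕ) (α : Fin n → Ω), (∀ i j : Fin n, i < j → lt (α i) (α j)) →
    IsRegularSeq (· < ·) (fun i => f (α i))


namespace Finsupp

variable {σ : Type*}

lemma eq_zero_or_eq_zero_of_disjoint {a b : σ →₀ ℕ} (h : Disjoint a b) (i : σ) :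
    a i = 0 ∨ b i = 0 := by
  simpa [bot_eq_zero] using DFunLike.congr_fun (_root_.disjoint_iff.mp h) i

lemma add_le_of_disjoint {a b M : σ →₀ ℕ} (h : Disjoint a b) (ha : a ≤ M) (hb : b ≤ M) :
    a + b ≤ M :=
  le_def.mpr fun i => by
    rcases eq_zero_or_eq_zero_of_disjoint h i with h0 | h0 <;> simp [h0, ha i, hb i]

lemma le_of_le_add_of_disjoint {a b c : σ →₀ ℕ} (h : Disjoint a b) (hle : a ≤ c + b) : a ≤ c :=
  le_def.mpr fun i => by
    have := hle i
    rcases eq_zero_or_eq_zero_of_disjoint h i with h0 | h0 <;> simp_all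

end Finsupp

namespace IsMonomialOrder

variable {σ : Type*} {r : (σ →₀ ℕ) → (σ →₀ ℕ) → Prop} (hr : IsMonomialOrder r)
include hr

lemma irrefl (a : σ →₀ ℕ) : ¬ r a a :=
  letI := hr.1; _root_.irrefl a

lemma trans {a b c : σ →₀ ℕ} : r a b → r b c → r a c :=
  letI := hr.1; _root_.trans

lemma wf : WellFounded r :=
  hr.1.wf

lemma add_lt_add_right {a b : σ →₀ ℕ} (h : r a b) (c : σ →₀ ℕ) : r (a + c) (b + c) := by
  simpa only [add_comm _ c] using hr.2 a b c h

lemma add_lt_add_of_lt_of_le {a a' b b' : σ →₀ ℕ} (ha : r a' a) (hb : b' ∈ insert b {x | r x b}) :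
    r (a' + b') (a + b) := by
  rcases hb with rfl | hb
  · exact hr.add_lt_add_right ha b'
  · exact hr.trans (hr.2 _ _ a' hb) (hr.add_lt_add_right ha b)

lemma add_le_add {a a' b b' : σ →₀ ℕ} (ha : a' ∈ insert a {x | r x a})
    (hb : b' ∈ insert b {x | r x b}) : a' + b' ∈ insert (a + b) {x | r x (a + b)} := by
  rcases ha with rfl | ha
  · rcases hb with rfl | hb
    · exact Set.mem_insert _ _
    · exact Or.inr (hr.2 _ _ a' hb)
  · exact Or.inr (hr.add_lt_add_of_lt_of_le ha hb)

lemma exists_max (s : Finset (σ →₀ ℕ)) (hs : s.Nonempty) :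
    ∃ M ∈ s, ∀ a ∈ s, a ∈ insert M {x | r x M} :=
  letI := hr.1
  -- in `IsWellOrder.linearOrder r`, `a ≤ b` unfolds to `a = b ∨ r a b`
  (@Finset.exists_max_image _ _ (IsWellOrder.linearOrder r) s id hs).imp
    fun _ ⟨hM, hmax⟩ => ⟨hM, hmax⟩

end IsMonomialOrder

section LeadingMonomial

variable {σ k : Type*} {r : (σ →₀ ℕ) → (σ →₀ ℕ) → Prop}

lemma isLM_monomial [CommSemiring k] (a : σ →₀ ℕ) {c : k} (hc : c ≠ 0) :
    IsLM r (monomial a c) a := by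
  classical
  refine ⟨by rw [support_monomial, if_neg hc, Finset.mem_singleton], fun a' ha' hne => ?_⟩
  rw [support_monomial, if_neg hc, Finset.mem_singleton] at ha'
  exact absurd ha' hne

lemma IsLM.mem_restrictSupport [CommSemiring k] {f : MvPolynomial σ k} {a : σ →₀ ℕ}
    (h : IsLM r f a) : f ∈ restrictSupport k (insert a {x | r x a}) := fun x hx =>
  (eq_or_ne x a).imp_right (h.2 x hx)

lemma IsLM.ne_zero [CommSemiring k] {f : MvPolynomial σ k} {a : σ →₀ ℕ} (h : IsLM r f a) :
    f ≠ 0 :=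
  support_nonempty.mp ⟨a, h.1⟩

lemma coeff_monomial_mul_tsub [CommSemiring k] {f : MvPolynomial σ k} {a M : σ →₀ ℕ}
    (h : a ≤ M) : coeff M (monomial (M - a) 1 * f) = coeff a f := by
  rw [coeff_monomial_mul', if_pos tsub_le_self, tsub_tsub_cancel_of_le h, one_mul]

lemma sub_smul_mem_restrictSupport [Field k] {h p : MvPolynomial σ k} {M : σ →₀ ℕ}
    (hh : h ∈ restrictSupport k (insert M {x | r x M}))
    (hp : p ∈ restrictSupport k (insert M {x | r x M})) (hp0 : coeff M p ≠ 0) :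
    h - (coeff M h / coeff M p) • p ∈ restrictSupport k {x | r x M} := by
  classical
  rw [mem_restrictSupport_iff]
  intro x hx
  have hxM : x ≠ M := by
    rintro rfl
    exact mem_support_iff.mp hx
      (by rw [coeff_sub, coeff_smul, smul_eq_mul, div_mul_cancel₀ _ hp0, sub_self])
  rcases Finset.mem_union.mp (support_sub σ h _ hx) with hx | hx
  · exact (hh hx).resolve_left hxM
  · exact (hp (support_smul hx)).resolve_left hxM

namespace IsMonomialOrder

variable (hr : IsMonomialOrder r)
include hr

lemma eq_of_isLM_of_mem_restrictSupport [CommSemiring k] {f : MvPolynomial σ k} {a M : σ →₀ ℕ}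
    (hf : IsLM r f a) (hM : f ∈ restrictSupport k (insert M {x | r x M})) (hMf : M ∈ f.support) :
    a = M := by
  by_contra hne
  rcases hM hf.1 with h | h
  · exact hne h
  · exact hr.irrefl _ (hr.trans h (hf.2 M hMf (Ne.symm hne)))

lemma exists_isLM [CommSemiring k] {f : MvPolynomial σ k} (hf : f ≠ 0) : ∃ a, IsLM r f a :=
  (hr.exists_max f.support (support_nonempty.mpr hf)).imp
    fun _ ⟨hM, hmax⟩ => ⟨hM, fun a ha hne => (hmax a ha).resolve_left hne⟩

lemma mul_mem_restrictSupport [CommSemiring k] {p q : MvPolynomial σ k} {a b : σ →₀ ℕ}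
    (hp : p ∈ restrictSupport k (insert a {x | r x a}))
    (hq : q ∈ restrictSupport k (insert b {x | r x b})) :
    p * q ∈ restrictSupport k (insert (a + b) {x | r x (a + b)}) := by
  classical
  intro x hx
  obtain ⟨c, hc, d, hd, rfl⟩ := Finset.mem_add.mp (support_mul p q hx)
  exact hr.add_le_add (hp hc) (hq hd)

lemma mul_mem_restrictSupport_of_lt [CommSemiring k] {p q : MvPolynomial σ k} {a b : σ →₀ ℕ}
    (hp : p ∈ restrictSupport k {x | r x a})
    (hq : q ∈ restrictSupport k (insert b {x | r x b})) :
    p * q ∈ restrictSupport k {x | r x (a + b)} := by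
  classical
  intro x hx
  obtain ⟨c, hc, d, hd, rfl⟩ := Finset.mem_add.mp (support_mul p q hx)
  exact hr.add_lt_add_of_lt_of_le (hp hc) (hq hd)

lemma coeff_add_mul [CommSemiring k] {p q : MvPolynomial σ k} {a b : σ →₀ ℕ}
    (hp : p ∈ restrictSupport k (insert a {x | r x a}))
    (hq : q ∈ restrictSupport k (insert b {x | r x b})) :
    coeff (a + b) (p * q) = coeff a p * coeff b q := by
  classical
  rw [coeff_mul,
    Finset.sum_eq_single_of_mem (a, b) (Finset.HasAntidiagonal.mem_antidiagonal.mpr rfl)]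
  rintro ⟨c, d⟩ hcd hne
  by_contra h0
  have hc := left_ne_zero_of_mul h0
  have hd := right_ne_zero_of_mul h0
  have hcd : c + d = a + b := Finset.HasAntidiagonal.mem_antidiagonal.mp hcd
  rcases hp (mem_support_iff.mpr hc) with rfl | hca
  · rcases hq (mem_support_iff.mpr hd) with rfl | hdb
    · exact hne rfl
    · exact hr.irrefl _ (hcd ▸ hr.2 _ _ c hdb)
  · exact hr.irrefl _ (hcd ▸ hr.add_lt_add_of_lt_of_le hca (hq (mem_support_iff.mpr hd)))

lemma isLM_mul [CommSemiring k] [NoZeroDivisors k] {f g : MvPolynomial σ k} {a b : σ →₀ ℕ}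
    (hf : IsLM r f a) (hg : IsLM r g b) : IsLM r (f * g) (a + b) := by
  have hprod := hr.mul_mem_restrictSupport hf.mem_restrictSupport hg.mem_restrictSupport
  refine ⟨?_, fun x hx hne => (hprod hx).resolve_left hne⟩
  rw [mem_support_iff, hr.coeff_add_mul hf.mem_restrictSupport hg.mem_restrictSupport]
  exact mul_ne_zero (mem_support_iff.mp hf.1) (mem_support_iff.mp hg.1)

lemma isLM_monomial_mul_tsub [CommSemiring k] [NoZeroDivisors k] [Nontrivial k]
    {f : MvPolynomial σ k} {a M : σ →₀ ℕ} (hf : IsLM r f a) (h : a ≤ M) :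
    IsLM r (monomial (M - a) 1 * f) M := by
  simpa only [tsub_add_cancel_of_le h] using hr.isLM_mul (isLM_monomial (M - a) one_ne_zero) hf

end IsMonomialOrder

end LeadingMonomial

lemma monomial_mem_span_monomial_image_iff {σ k Ω : Type*} [CommRing k] [Nontrivial k]
    {m : Ω → σ →₀ ℕ} {A : Set Ω} {u : σ →₀ ℕ} :
    (monomial u 1 : MvPolynomial σ k) ∈ Ideal.span ((fun α => monomial (m α) 1) '' A) ↔
      ∃ α ∈ A, m α ≤ u := by
  classical
  rw [← Set.image_image (fun s => (monomial s 1 : MvPolynomial σ k)) m A,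
    mem_ideal_span_monomial_image, support_monomial, if_neg one_ne_zero]
  simp

namespace IsRegularSeq

variable {σ k Ω : Type*} [CommRing k] {lt : Ω → Ω → Prop} {m : Ω → σ →₀ ℕ}
  (hreg : IsRegularSeq lt (fun α => (monomial (m α) 1 : MvPolynomial σ k)))
include hreg

lemma ne_zero_of_monomial (α : Ω) : m α ≠ 0 := fun h =>
  hreg.1 <| (Ideal.eq_top_iff_one _).mpr <| Ideal.subset_span ⟨α, by simp [h]⟩

variable [Nontrivial k]

lemma exists_le_of_monomial {α γ : Ω} {u : σ →₀ ℕ} (hγ : lt γ α) (h : m γ ≤ u + m α) :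
    ∃ δ, lt δ α ∧ m δ ≤ u := by
  have hmul : monomial u 1 * monomial (m α) 1 ∈
      Ideal.span ((fun β => (monomial (m β) 1 : MvPolynomial σ k)) '' {β | lt β α}) := by
    rw [monomial_mul, one_mul, monomial_mem_span_monomial_image_iff]
    exact ⟨γ, hγ, h⟩
  exact monomial_mem_span_monomial_image_iff.mp (hreg.2 α _ hmul)

lemma not_le_of_monomial (hwo : IsWellOrder Ω lt) {γ β : Ω} (hne : γ ≠ β) : ¬ m γ ≤ m β := by
  induction γ using hwo.wf.induction generalizing β with
  | _ γ ih =>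
  have := hwo
  intro hle
  rcases trichotomous_of lt γ β with hγβ | rfl | hβγ
  · obtain ⟨δ, -, hδ⟩ := hreg.exists_le_of_monomial (u := 0) hγβ (by rwa [zero_add])
    exact hreg.ne_zero_of_monomial δ (nonpos_iff_eq_zero.mp hδ)
  · exact hne rfl
  · obtain ⟨δ, hδγ, hδ⟩ := hreg.exists_le_of_monomial (u := m β - m γ) hβγ le_tsub_add
    refine ih δ hδγ ?_ (hδ.trans tsub_le_self)
    rintro rfl
    exact hreg.ne_zero_of_monomial γ
      (nonpos_iff_eq_zero.mp ((add_le_iff_nonpos_right _).mp ((le_tsub_iff_right hle).mp hδ)))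

lemma pairwise_disjoint_of_monomial (hwo : IsWellOrder Ω lt) :
    Pairwise fun α β => Disjoint (m α) (m β) := by
  have := hwo
  have of_lt : ∀ {β γ}, lt β γ → Disjoint (m β) (m γ) := by
    intro β γ hβγ
    by_contra hnd
    obtain ⟨i, hβi, hγi⟩ : ∃ i, m β i ≠ 0 ∧ m γ i ≠ 0 := by
      simpa [Finsupp.disjoint_iff, Finset.not_disjoint_iff] using hnd
    obtain ⟨δ, hδγ, hδ⟩ := hreg.exists_le_of_monomial (u := m β - m γ) hβγ le_tsub_add
    rcases eq_or_ne δ β with rfl | hne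
    · have := Finsupp.le_def.mp hδ i
      simp only [Finsupp.coe_tsub, Pi.sub_apply] at this
      omega
    · exact hreg.not_le_of_monomial hwo hne (hδ.trans tsub_le_self)
  intro α β hne
  rcases trichotomous_of lt α β with h | h | h
  · exact of_lt h
  · exact absurd h hne
  · exact (of_lt h).symm

end IsRegularSeq

section Multiples

variable {σ k Ω : Type*} [Field k] {r : (σ →₀ ℕ) → (σ →₀ ℕ) → Prop}

/-- The `k`-span of the multiples `x^u * f α` with `α ∈ A` and `u + m α ∈ B`; when `m α` is the
leading monomial of `f α`, `u + m α` is that of `x^u * f α`. -/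
def multiplesSpan (f : Ω → MvPolynomial σ k) (m : Ω → σ →₀ ℕ) (A : Set Ω)
    (B : Set (σ →₀ ℕ)) : Submodule k (MvPolynomial σ k) :=
  Submodule.span k ((fun p : Ω × (σ →₀ ℕ) => monomial p.2 1 * f p.1) ''
    {p | p.1 ∈ A ∧ p.2 + m p.1 ∈ B})

variable {f : Ω → MvPolynomial σ k} {m : Ω → σ →₀ ℕ} {A : Set Ω}

lemma mul_mem_multiplesSpan {B : Set (σ →₀ ℕ)} {α : Ω} (hα : α ∈ A) {q : MvPolynomial σ k}
    (hq : ∀ v ∈ q.support, v + m α ∈ B) : q * f α ∈ multiplesSpan f m A B := by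
  rw [q.as_sum, Finset.sum_mul]
  refine Submodule.sum_mem _ fun v hv => ?_
  have : monomial v (coeff v q) * f α = coeff v q • (monomial v 1 * f α) := by
    rw [← smul_mul_assoc, smul_monomial, smul_eq_mul, mul_one]
  rw [this]
  exact Submodule.smul_mem _ _ (Submodule.subset_span ⟨(α, v), ⟨hα, hq v hv⟩, rfl⟩)

lemma mem_multiplesSpan_univ_of_mem_span {g : MvPolynomial σ k}
    (hg : g ∈ Ideal.span (f '' A)) : g ∈ multiplesSpan f m A Set.univ := by
  induction hg using Submodule.span_induction with
  | mem x hx =>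
    obtain ⟨α, hα, rfl⟩ := hx
    simpa using mul_mem_multiplesSpan (m := m) (q := 1) hα (by simp)
  | zero => exact zero_mem _
  | add x y _ _ hx hy => exact add_mem hx hy
  | smul a x hx' hx =>
    clear hx'
    induction hx using Submodule.span_induction with
    | mem y hy =>
      obtain ⟨⟨α, u⟩, ⟨hα, -⟩, rfl⟩ := hy
      rw [smul_eq_mul, ← mul_assoc]
      exact mul_mem_multiplesSpan hα (by simp)
    | zero => simp
    | add y z _ _ hy hz => rw [smul_add]; exact add_mem hy hz
    | smul c y _ hy => rw [smul_comm]; exact Submodule.smul_mem _ c hy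

lemma multiplesSpan_insert_le {M : σ →₀ ℕ} (h : ∀ α ∈ A, ¬ m α ≤ M) :
    multiplesSpan f m A (insert M {a | r a M}) ≤ multiplesSpan f m A {a | r a M} :=
  Submodule.span_mono <| Set.image_mono fun p ⟨hp, hpM⟩ =>
    ⟨hp, hpM.resolve_left fun hM => h p.1 hp (hM ▸ le_add_self)⟩

variable (hr : IsMonomialOrder r)
include hr

lemma exists_mem_multiplesSpan_insert {B : Set (σ →₀ ℕ)} {g : MvPolynomial σ k}
    (hg : g ∈ multiplesSpan f m A B) (hg0 : g ≠ 0) :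
    ∃ M ∈ B, g ∈ multiplesSpan f m A (insert M {a | r a M}) := by
  classical
  obtain ⟨l, hl, rfl⟩ := (Finsupp.mem_span_image_iff_linearCombination k).mp hg
  have hne : (l.support.image fun p => p.2 + m p.1).Nonempty := by
    refine Finset.image_nonempty.mpr (Finsupp.support_nonempty_iff.mpr ?_)
    rintro rfl
    exact hg0 (map_zero _)
  obtain ⟨M, hM, hmax⟩ := hr.exists_max _ hne
  obtain ⟨p, hp, rfl⟩ := Finset.mem_image.mp hM
  refine ⟨_, (hl hp).2, (Finsupp.mem_span_image_iff_linearCombination k).mpr ⟨l, fun q hq =>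
    ⟨(hl hq).1, hmax _ (Finset.mem_image_of_mem _ hq)⟩, rfl⟩⟩

variable (hm : ∀ α, IsLM r (f α) (m α))
include hm

lemma multiplesSpan_le_restrictSupport {B : Set (σ →₀ ℕ)}
    (hB : ∀ a b, r a b → b ∈ B → a ∈ B) : multiplesSpan f m A B ≤ restrictSupport k B := by
  rw [multiplesSpan, Submodule.span_le]
  rintro _ ⟨⟨α, u⟩, ⟨-, hu⟩, rfl⟩ x hx
  rcases hr.mul_mem_restrictSupport (isLM_monomial u one_ne_zero).mem_restrictSupport
    (hm α).mem_restrictSupport hx with rfl | hlt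
  · exact hu
  · exact hB _ _ hlt hu

/-- The Koszul syzygy: writing `M = m α + m β + w`, the difference equals
`x^w (tail(f α) f β - tail(f β) f α)`, where `tail(f) = f - lt(f)`. -/
lemma smul_sub_smul_mem_multiplesSpan {α β : Ω} (hα : α ∈ A) (hβ : β ∈ A) {M : σ →₀ ℕ}
    (h : m α + m β ≤ M) :
    coeff (m β) (f β) • (monomial (M - m α) 1 * f α) -
      coeff (m α) (f α) • (monomial (M - m β) 1 * f β) ∈ multiplesSpan f m A {a | r a M} := by
  classical
  obtain ⟨w, rfl⟩ := exists_add_of_le h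
  have tail_mul_mem : ∀ γ δ, δ ∈ A →
      (f γ - coeff (m γ) (f γ) • monomial (m γ) 1) * monomial w 1 * f δ ∈
        multiplesSpan f m A {a | r a (m γ + w + m δ)} := by
    intro γ δ hδ
    have htail : f γ - coeff (m γ) (f γ) • monomial (m γ) 1 ∈
        restrictSupport k {a | r a (m γ)} := by
      simpa using sub_smul_mem_restrictSupport (hm γ).mem_restrictSupport
        (isLM_monomial (m γ) one_ne_zero).mem_restrictSupport
        (by rw [coeff_monomial, if_pos rfl]; exact one_ne_zero)
    refine mul_mem_multiplesSpan hδ fun v hv => hr.add_lt_add_right ?_ _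
    exact hr.mul_mem_restrictSupport_of_lt htail
      (isLM_monomial w one_ne_zero).mem_restrictSupport hv
  have hα' := tail_mul_mem α β hβ
  have hβ' := tail_mul_mem β α hα
  rw [add_right_comm] at hα'
  rw [add_right_comm, add_comm (m β)] at hβ'
  convert sub_mem hα' hβ' using 1
  have hmon : ∀ a b : σ →₀ ℕ, (monomial (a + b) 1 : MvPolynomial σ k) =
      monomial a 1 * monomial b 1 := by simp [monomial_mul]
  rw [add_assoc, add_tsub_cancel_left, add_comm (m α), add_assoc, add_tsub_cancel_left,
    hmon, hmon]
  simp only [smul_eq_C_mul]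
  ring

lemma coeff_eq_zero_of_mem_multiplesSpan {M : σ →₀ ℕ} {g : MvPolynomial σ k}
    (hg : g ∈ multiplesSpan f m A {a | r a M}) : coeff M g = 0 :=
  notMem_support_iff.mp fun hM => hr.irrefl M <|
    multiplesSpan_le_restrictSupport hr hm (fun _ _ hab hb => hr.trans hab hb) hg hM

lemma exists_le_of_coeff_ne_zero {M : σ →₀ ℕ} {g : MvPolynomial σ k}
    (hg : g ∈ multiplesSpan f m A (insert M {a | r a M})) (hgM : coeff M g ≠ 0) :
    ∃ α ∈ A, m α ≤ M := by
  by_contra! h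
  exact hgM (coeff_eq_zero_of_mem_multiplesSpan hr hm (multiplesSpan_insert_le h hg))

variable (hcop : Pairwise fun α β => Disjoint (m α) (m β))
include hcop

lemma mem_multiplesSpan_of_coeff_eq_zero {M : σ →₀ ℕ} {g : MvPolynomial σ k}
    (hg : g ∈ multiplesSpan f m A (insert M {a | r a M})) (hgM : coeff M g = 0) :
    g ∈ multiplesSpan f m A {a | r a M} := by
  by_cases hex : ∃ α ∈ A, m α ≤ M
  swap
  · push Not at hex
    exact multiplesSpan_insert_le hex hg
  obtain ⟨α₀, hα₀, hle₀⟩ := hex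
  set N := multiplesSpan f m A {a | r a M}
  set t₀ := monomial (M - m α₀) 1 * f α₀
  have hlc₀ : coeff (m α₀) (f α₀) ≠ 0 := mem_support_iff.mp (hm α₀).1
  have hsplit : multiplesSpan f m A (insert M {a | r a M}) ≤ N ⊔ Submodule.span k {t₀} := by
    rw [multiplesSpan, Submodule.span_le]
    rintro _ ⟨⟨α, u⟩, ⟨hα, hM | hlt⟩, rfl⟩
    · dsimp only at hα hM ⊢
      obtain rfl : u = M - m α := eq_tsub_of_add_eq hM
      rcases eq_or_ne α α₀ with rfl | hne
      · exact Submodule.mem_sup_right (Submodule.mem_span_singleton_self _)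
      have hK := smul_sub_smul_mem_multiplesSpan hr hm hα hα₀
        (Finsupp.add_le_of_disjoint (hcop hne) (le_add_self.trans_eq hM) hle₀)
      have : monomial (M - m α) 1 * f α = (coeff (m α₀) (f α₀))⁻¹ •
          ((coeff (m α₀) (f α₀) • (monomial (M - m α) 1 * f α) - coeff (m α) (f α) • t₀) +
            coeff (m α) (f α) • t₀) := by
        rw [sub_add_cancel, inv_smul_smul₀ hlc₀]
      rw [this]
      exact Submodule.smul_mem _ _ (add_mem (Submodule.mem_sup_left hK)
        (Submodule.mem_sup_right (Submodule.smul_mem _ _ (Submodule.mem_span_singleton_self _))))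
    · exact Submodule.mem_sup_left (Submodule.subset_span ⟨(α, u), ⟨hα, hlt⟩, rfl⟩)
  -- modulo `N`, `g` is a multiple `c • t₀`, and its coefficient at `M` forces `c = 0`
  obtain ⟨n, hn, t, ht, rfl⟩ := Submodule.mem_sup.mp (hsplit hg)
  obtain ⟨c, rfl⟩ := Submodule.mem_span_singleton.mp ht
  have hc : c = 0 := by
    rw [coeff_add, coeff_eq_zero_of_mem_multiplesSpan hr hm hn, zero_add, coeff_smul,
      coeff_monomial_mul_tsub hle₀, smul_eq_mul] at hgM
    exact (mul_eq_zero.mp hgM).resolve_right hlc₀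
  rwa [hc, zero_smul, add_zero]

theorem exists_le_of_isLM_of_mem_span {g : MvPolynomial σ k} {Mg : σ →₀ ℕ}
    (hg : g ∈ Ideal.span (f '' A)) (hMg : IsLM r g Mg) : ∃ α ∈ A, m α ≤ Mg := by
  obtain ⟨M, -, hgM⟩ :=
    exists_mem_multiplesSpan_insert hr (mem_multiplesSpan_univ_of_mem_span (m := m) hg) hMg.ne_zero
  induction M using hr.wf.induction with
  | _ M ih =>
  by_cases hc : coeff M g = 0
  · obtain ⟨M', hM', hgM'⟩ := exists_mem_multiplesSpan_insert hr
      (mem_multiplesSpan_of_coeff_eq_zero hr hm hcop hgM hc) hMg.ne_zero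
    exact ih M' hM' hgM'
  · obtain rfl : Mg = M := hr.eq_of_isLM_of_mem_restrictSupport hMg
      (multiplesSpan_le_restrictSupport hr hm (fun _ _ hab hb => hb.elim
        (fun h => Or.inr (h ▸ hab)) (fun h => Or.inr (hr.trans hab h))) hgM)
      (mem_support_iff.mpr hc)
    exact exists_le_of_coeff_ne_zero hr hm hgM hc

theorem mem_span_of_mul_mem_span {α : Ω} (hα : α ∉ A) {h : MvPolynomial σ k}
    (hh : h * f α ∈ Ideal.span (f '' A)) : h ∈ Ideal.span (f '' A) := by
  rcases eq_or_ne h 0 with rfl | h0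
  · exact zero_mem _
  obtain ⟨M, hM⟩ := hr.exists_isLM h0
  induction M using hr.wf.induction generalizing h with
  | _ M ih =>
  obtain ⟨β, hβ, hle⟩ := exists_le_of_isLM_of_mem_span hr hm hcop hh (hr.isLM_mul hM (hm α))
  have hβM : m β ≤ M := Finsupp.le_of_le_add_of_disjoint (hcop (ne_of_mem_of_not_mem hβ hα)) hle
  set p := monomial (M - m β) 1 * f β
  have hp : p ∈ Ideal.span (f '' A) := Ideal.mul_mem_left _ _ (Ideal.subset_span ⟨β, hβ, rfl⟩)
  have hpM : IsLM r p M := hr.isLM_monomial_mul_tsub (hm β) hβM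
  set c := coeff M h / coeff M p
  have hcp : c • p ∈ Ideal.span (f '' A) := by
    rw [smul_eq_C_mul]
    exact Ideal.mul_mem_left _ _ hp
  have hlt : h - c • p ∈ restrictSupport k {a | r a M} :=
    sub_smul_mem_restrictSupport hM.mem_restrictSupport hpM.mem_restrictSupport
      (mem_support_iff.mp hpM.1)
  rw [← sub_add_cancel h (c • p)]
  refine add_mem ?_ hcp
  rcases eq_or_ne (h - c • p) 0 with h₁0 | h₁0
  · rw [h₁0]
    exact zero_mem _
  obtain ⟨M₁, hM₁⟩ := hr.exists_isLM h₁0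
  refine ih M₁ (hlt hM₁.1) ?_ h₁0 hM₁
  rw [sub_mul]
  exact sub_mem hh (Ideal.mul_mem_right _ _ hcp)

end Multiples

theorem isGroebnerBasis_span {σ k : Type*} [Field k] {r : (σ →₀ ℕ) → (σ →₀ ℕ) → Prop}
    {G : Set (MvPolynomial σ k)}
    (hG : ∀ g ∈ Ideal.span G, ∀ M, IsLM r g M → ∃ a, (∃ p ∈ G, p ≠ 0 ∧ IsLM r p a) ∧ a ≤ M) :
    IsGroebnerBasis r G (Ideal.span G) := by
  refine ⟨Ideal.subset_span, le_antisymm ?_ ?_⟩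
  · rw [Ideal.span_le]
    rintro _ ⟨a, ⟨p, hp, hp0, hpa⟩, rfl⟩
    have hlt : monomial a (coeff a p) ∈ initialIdeal r (Ideal.span G) :=
      Ideal.subset_span ⟨p, Ideal.subset_span hp, hp0, a, hpa, rfl⟩
    simpa [C_mul_monomial, mem_support_iff.mp hpa.1] using
      Ideal.mul_mem_left _ (C (coeff a p)⁻¹) hlt
  · rw [initialIdeal, Ideal.span_le]
    rintro _ ⟨g, hg, -, M, hM, rfl⟩
    obtain ⟨a, ha, haM⟩ := hG g hg M hM
    have : monomial M (coeff M g) = monomial (M - a) (coeff M g) * monomial a 1 := by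
      rw [monomial_mul, mul_one, tsub_add_cancel_of_le haM]
    rw [SetLike.mem_coe, this]
    exact Ideal.mul_mem_left _ _ (Ideal.subset_span ⟨a, ha, rfl⟩)

/-- Proposition 1.25 (generalized Bayer–Stillman criterion): if the leading monomials of
a family `(f_α)` of nonzero polynomials form a regular sequence on `S`, then `(f_α)` is a
regular sequence on `S` and `{f_α}` is a Gröbner base for the ideal it generates. -/
theorem bayer_stillman {k : Type*} [Field k]
    (r : (ℕ →₀ ℕ) → (ℕ →₀ ℕ) → Prop) (hr : IsMonomialOrder r)
    {Ω : Type*} (lt : Ω → Ω → Prop) (hwo : IsWellOrder Ω lt)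
    (f : Ω → MvPolynomial ℕ k) (hf : ∀ α, f α ≠ 0)
    (m : Ω → (ℕ →₀ ℕ)) (hm : ∀ α, IsLM r (f α) (m α))
    (hreg : IsRegularSeq lt (fun α => (monomial (m α) 1 : MvPolynomial ℕ k))) :
    IsRegularSeq lt f ∧
      IsGroebnerBasis r (Set.range f) (Ideal.span (Set.range f)) := by
  have := hwo
  have hcop := hreg.pairwise_disjoint_of_monomial hwo
  refine ⟨⟨fun htop => ?_, fun α _ =>
    mem_span_of_mul_mem_span (A := {β | lt β α}) hr hm hcop (irrefl α)⟩,
    isGroebnerBasis_span fun g hg M hM => ?_⟩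
  · have h1 : (monomial 0 1 : MvPolynomial ℕ k) ∈ Ideal.span (f '' Set.univ) := by
      rw [Set.image_univ, htop]
      exact Submodule.mem_top
    obtain ⟨α, -, hα⟩ := exists_le_of_isLM_of_mem_span hr hm hcop h1
      (isLM_monomial (r := r) 0 one_ne_zero)
    exact hreg.ne_zero_of_monomial α (nonpos_iff_eq_zero.mp hα)
  · rw [← Set.image_univ] at hg
    obtain ⟨α, -, hα⟩ := exists_le_of_isLM_of_mem_span hr hm hcop hg hM
    exact ⟨m α, ⟨f α, ⟨α, rfl⟩, hf α, hm α⟩, hα⟩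

end
end

section
/- Let W be a subset of the positive integers and p ≥ 2 an integer with pW ⊆ W, and let R = k[x_i : i ∈ W] be the polynomial ring over the field k in variables indexed by W, graded by deg(x_i) = i. Let > be a monomial order on R such that the leading monomial of x_i^p − x_{pi} is x_i^p for every i ∈ W (for example, the homogeneous anti-reverse lexicographic order). Then G = {x_i^p − x_{pi} : i ∈ W} is a homogeneous regular sequence on R (for any well-ordering of W) and G is a reduced Gröbner base for the ideal GR it generates. -/
open MvPolynomial

noncomputable section

/-!
Pulling a variable `x_b` back along `φ a = p a` for as long as the preimage lies in `S`
rewrites it as `x_a ^ p ^ t` modulo the relations `x_a ^ p - x_{φ a}`, `a ∈ S`. This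
substitution is an algebra endomorphism whose kernel is exactly the ideal generated by those
relations. Its values lie in a domain, and it does not kill `x_α ^ p - x_{φ α}` for `α ∉ S`, so
the relations form a regular sequence in any order.

For `S = W` the substitution sends a monomial with all exponents `< p` to a monomial in which
those exponents reappear as base-`p` digits, so distinct such monomials have distinct images.
An element of the ideal is killed by the substitution, so its leading monomial cannot be of
this kind: it is divisible by some `x_i ^ p`.
-/

namespace Nat

theorem eq_and_eq_of_mul_add_eq {q a b x y : ℕ} (hx : x < q) (hy : y < q)
    (h : q * a + x = q * b + y) : a = b ∧ x = y := by
  have hq : 0 < q := by omega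
  have ha := (Nat.div_mod_unique (a := q * a + x) (d := a) hq).2 ⟨add_comm _ _, hx⟩
  have hb := (Nat.div_mod_unique (a := q * b + y) (d := b) hq).2 ⟨add_comm _ _, hy⟩
  rw [h] at ha
  exact ⟨ha.1.symm.trans hb.1, ha.2.symm.trans hb.2⟩

end Nat

namespace Finset

variable {ι : Type*} [DecidableEq ι] {e : ι → ℕ}

theorem lt_of_injOn_insert {s : Finset ι} {i : ι} (he : Set.InjOn e ↑(insert i s)) (hi : i ∉ s)
    (hmax : ∀ x ∈ s, e x ≤ e i) : ∀ x ∈ s, e x < e i := fun x hx =>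
  (hmax x hx).lt_of_ne fun hex =>
    hi (he (mem_insert_of_mem hx) (mem_insert_self i s) hex ▸ hx)

variable {p : ℕ}

theorem sum_pow_mul_lt_pow (hp : 0 < p) {a : ι → ℕ} (s : Finset ι) (he : Set.InjOn e s)
    (ha : ∀ i ∈ s, a i < p) {N : ℕ} (hN : ∀ i ∈ s, e i < N) :
    ∑ i ∈ s, p ^ e i * a i < p ^ N := by
  induction s using Finset.induction_on_max_value e generalizing N with
  | empty => simpa using pow_pos hp N
  | insert i s hi hmax ih =>
    have hs := ih (he.mono (subset_insert i s)) (fun x hx => ha x (mem_insert_of_mem hx))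
      (lt_of_injOn_insert he hi hmax)
    calc ∑ x ∈ insert i s, p ^ e x * a x = p ^ e i * a i + ∑ x ∈ s, p ^ e x * a x :=
          sum_insert hi
      _ < p ^ e i * (a i + 1) := by rw [mul_add_one]; exact Nat.add_lt_add_left hs _
      _ ≤ p ^ e i * p := Nat.mul_le_mul_left _ (ha i (mem_insert_self i s))
      _ ≤ p ^ N := by rw [← pow_succ]; exact Nat.pow_le_pow_right hp (hN i (mem_insert_self i s))

theorem eq_of_sum_pow_mul_eq {a b : ι → ℕ} (s : Finset ι) (he : Set.InjOn e s)
    (ha : ∀ i ∈ s, a i < p) (hb : ∀ i ∈ s, b i < p)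
    (h : ∑ i ∈ s, p ^ e i * a i = ∑ i ∈ s, p ^ e i * b i) : ∀ i ∈ s, a i = b i := by
  induction s using Finset.induction_on_max_value e with
  | empty => simp
  | insert i s hi hmax ih =>
    have hpos : 0 < p := (Nat.zero_le _).trans_lt (ha i (mem_insert_self i s))
    have hs : Set.InjOn e s := he.mono (subset_insert i s)
    have ha' x (hx : x ∈ s) := ha x (mem_insert_of_mem hx)
    have hb' x (hx : x ∈ s) := hb x (mem_insert_of_mem hx)
    have hlt := lt_of_injOn_insert he hi hmax
    rw [sum_insert hi, sum_insert hi] at h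
    obtain ⟨hi_eq, hs_eq⟩ := Nat.eq_and_eq_of_mul_add_eq (sum_pow_mul_lt_pow hpos s hs ha' hlt)
      (sum_pow_mul_lt_pow hpos s hs hb' hlt) h
    intro x hx
    rcases mem_insert.1 hx with rfl | hx
    exacts [hi_eq, ih hs ha' hb' hs_eq x hx]

end Finset

namespace MvPolynomial

variable {σ k : Type*} [CommRing k] {i j : σ} {n : ℕ}

theorem X_pow_sub_X_ne_zero [Nontrivial k] (hn : n ≠ 1) :
    (X i ^ n - X j : MvPolynomial σ k) ≠ 0 := by
  rw [sub_ne_zero, X_pow_eq_monomial, X, Ne, monomial_left_inj one_ne_zero,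
    Finsupp.single_eq_single_iff]
  omega

theorem mem_support_X_pow_sub_X {m : σ →₀ ℕ} (hm : m ∈ (X i ^ n - X j : MvPolynomial σ k).support) :
    m = Finsupp.single i n ∨ m = Finsupp.single j 1 := by
  classical
  have := support_sub σ _ _ hm
  rw [Finset.mem_union, X_pow_eq_monomial, X] at this
  exact this.imp (fun h => Finset.mem_singleton.1 (support_monomial_subset h))
    (fun h => Finset.mem_singleton.1 (support_monomial_subset h))

theorem coeff_X_pow_sub_X (hne : Finsupp.single j 1 ≠ Finsupp.single i n) :
    coeff (Finsupp.single i n) (X i ^ n - X j : MvPolynomial σ k) = 1 := by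
  classical
  rw [coeff_sub, coeff_X_pow, coeff_X, if_pos rfl, if_neg hne, sub_zero]

end MvPolynomial

section LeadingMonomial

variable {σ k : Type*} {r : (σ →₀ ℕ) → (σ →₀ ℕ) → Prop}

theorem IsLM.unique [CommSemiring k] [IsStrictOrder (σ →₀ ℕ) r] {f : MvPolynomial σ k}
    {m m' : σ →₀ ℕ} (h : IsLM r f m) (h' : IsLM r f m') : m = m' := by
  by_contra hne
  exact asymm (h'.2 m h.1 hne) (h.2 m' h'.1 (Ne.symm hne))

theorem isLM_X_pow_sub_X [CommRing k] [Nontrivial k] [Std.Irrefl r] {i j : σ} {n : ℕ}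
    (h : r (Finsupp.single j 1) (Finsupp.single i n)) :
    IsLM r (X i ^ n - X j : MvPolynomial σ k) (Finsupp.single i n) := by
  have hne : Finsupp.single j 1 ≠ Finsupp.single i n := fun he => irrefl _ (he ▸ h)
  refine ⟨by rw [mem_support_iff, coeff_X_pow_sub_X hne]; exact one_ne_zero, fun m hm hmne => ?_⟩
  obtain rfl | rfl := mem_support_X_pow_sub_X hm
  exacts [(hmne rfl).elim, h]

theorem isGroebnerBasis_of_forall_isLM_le [Field k] {G : Set (MvPolynomial σ k)}
    {I : Ideal (MvPolynomial σ k)} (hGI : G ⊆ I)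
    (h : ∀ f ∈ I, ∀ m, IsLM r f m → ∃ g ∈ G, ∃ n, IsLM r g n ∧ n ≤ m) :
    IsGroebnerBasis r G I := by
  refine ⟨hGI, le_antisymm (Ideal.span_le.2 ?_) (Ideal.span_le.2 ?_)⟩
  · rintro _ ⟨n, ⟨g, hg, hg0, hn⟩, rfl⟩
    rw [SetLike.mem_coe]
    have hlt : monomial n (coeff n g) ∈ initialIdeal r I :=
      Ideal.subset_span ⟨g, hGI hg, hg0, n, hn, rfl⟩
    convert Ideal.mul_mem_left _ (C (coeff n g)⁻¹) hlt using 1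
    rw [C_mul_monomial, inv_mul_cancel₀ (mem_support_iff.1 hn.1)]
  · rintro _ ⟨f, hf, -, m, hm, rfl⟩
    obtain ⟨g, hg, n, hn, hnm⟩ := h f hf m hm
    rw [SetLike.mem_coe]
    have hg0 : g ≠ 0 := by rintro rfl; simp [IsLM] at hn
    have hlm : monomial n 1 ∈ Ideal.span (lmMonomials r G) :=
      Ideal.subset_span ⟨n, ⟨g, hg, hg0, hn⟩, rfl⟩
    convert Ideal.mul_mem_left _ (monomial (m - n) (coeff m f)) hlm using 1
    rw [monomial_mul, mul_one, tsub_add_cancel_of_le hnm]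

end LeadingMonomial

section Descend

variable {σ : Type*} (φ : σ → σ) (w : σ → ℕ) (hw : ∀ a, w a < w (φ a))

open Classical in
/-- `descend φ w hw S b = (a, t)` with `b = φ^[t] a`, where `a` is reached by pulling `b` back
along `φ` as long as the preimage lies in `S`. -/
def descend (S : Set σ) (b : σ) : σ × ℕ :=
  if h : ∃ a ∈ S, φ a = b then
    have : w h.choose < w b := by have := hw h.choose; rwa [h.choose_spec.2] at this
    ((descend S h.choose).1, (descend S h.choose).2 + 1)
  else (b, 0)
termination_by w b

variable {φ w hw} (S : Set σ)

theorem iterate_descend (b : σ) : φ^[(descend φ w hw S b).2] (descend φ w hw S b).1 = b := by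
  fun_induction descend φ w hw S b with
  | case1 b h _ ih => rw [Function.iterate_succ_apply', ih, h.choose_spec.2]
  | case2 => rfl

theorem descend_injective : Function.Injective (descend φ w hw S) :=
  Function.LeftInverse.injective (g := fun q : σ × ℕ => φ^[q.2] q.1) fun b => iterate_descend S b

theorem descend_of_notMem {b : σ} (h : ¬∃ a ∈ S, φ a = b) : descend φ w hw S b = (b, 0) := by
  rw [descend, dif_neg h]

theorem descend_apply_of_mem (hφ : Function.Injective φ) {a : σ} (ha : a ∈ S) :
    descend φ w hw S (φ a) = ((descend φ w hw S a).1, (descend φ w hw S a).2 + 1) := by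
  have h : ∃ a' ∈ S, φ a' = φ a := ⟨a, ha, rfl⟩
  rw [descend, dif_pos h]
  simp only [hφ h.choose_spec.2]

end Descend

section DescentMap

variable (k : Type*) {σ : Type*} (φ : σ → σ) (p : ℕ)

def powerRelation [CommRing k] (i : σ) : MvPolynomial σ k := X i ^ p - X (φ i)

variable {φ} (w : σ → ℕ) (hw : ∀ a, w a < w (φ a))

/-- `x_a ^ p ^ t`, for `(a, t) = descend φ w hw S b`, is the normal form of `x_b` modulo the
relations `powerRelation k φ p a` with `a ∈ S`. -/
def descentMap [CommSemiring k] (S : Set σ) : MvPolynomial σ k →ₐ[k] MvPolynomial σ k :=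
  aeval fun b => X (descend φ w hw S b).1 ^ p ^ (descend φ w hw S b).2

variable {k p w hw} [CommRing k] (S : Set σ)

theorem descentMap_powerRelation_of_mem (hφ : Function.Injective φ) {a : σ} (ha : a ∈ S) :
    descentMap k p w hw S (powerRelation k φ p a) = 0 := by
  rw [powerRelation, descentMap, map_sub, map_pow, aeval_X, aeval_X,
    descend_apply_of_mem S hφ ha, pow_succ, pow_mul, sub_self]

theorem X_sub_descentMap_X_mem (b : σ) :
    X b - descentMap k p w hw S (X b) ∈ Ideal.span (powerRelation k φ p '' S) := by
  rw [descentMap, aeval_X]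
  fun_induction descend φ w hw S b with
  | case1 b h _ ih =>
    obtain ⟨ha, hab⟩ := h.choose_spec
    have hrel : powerRelation k φ p h.choose ∈ Ideal.span (powerRelation k φ p '' S) :=
      Ideal.subset_span ⟨_, ha, rfl⟩
    have hpow := Ideal.mem_of_dvd _ (sub_dvd_pow_sub_pow _ _ p) ih
    convert Ideal.sub_mem _ hpow hrel using 1
    rw [powerRelation, hab, pow_succ, pow_mul]
    ring
  | case2 => simp

theorem sub_descentMap_mem (f : MvPolynomial σ k) :
    f - descentMap k p w hw S f ∈ Ideal.span (powerRelation k φ p '' S) := by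
  have hmk : (Ideal.Quotient.mkₐ k _).comp (descentMap k p w hw S) = Ideal.Quotient.mkₐ k _ :=
    algHom_ext fun b => (Ideal.Quotient.eq.2 (X_sub_descentMap_X_mem S b)).symm
  exact Ideal.Quotient.eq.1 (AlgHom.congr_fun hmk f).symm

theorem ker_descentMap (hφ : Function.Injective φ) :
    RingHom.ker (descentMap k p w hw S) = Ideal.span (powerRelation k φ p '' S) := by
  refine le_antisymm (fun f hf => ?_) (Ideal.span_le.2 ?_)
  · simpa [RingHom.mem_ker.1 hf] using sub_descentMap_mem (p := p) (hw := hw) (φ := φ) S f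
  · rintro _ ⟨a, ha, rfl⟩
    exact descentMap_powerRelation_of_mem S hφ ha

theorem descentMap_powerRelation_ne_zero [Nontrivial k] (hφ : Function.Injective φ) (hp : 2 ≤ p)
    {a : σ} (ha : a ∉ S) : descentMap k p w hw S (powerRelation k φ p a) ≠ 0 := by
  have hφa : ¬∃ a' ∈ S, φ a' = φ a := fun ⟨a', ha', h⟩ => ha (hφ h ▸ ha')
  rw [powerRelation, descentMap, map_sub, map_pow, aeval_X, aeval_X, descend_of_notMem S hφa,
    pow_zero, pow_one, ← pow_mul, ← pow_succ]
  exact X_pow_sub_X_ne_zero (Nat.one_lt_pow (Nat.succ_ne_zero _) hp).ne'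

end DescentMap

theorem isRegularSeq_powerRelation {k σ : Type*} [CommRing k] [IsDomain k] {φ : σ → σ}
    (hφ : Function.Injective φ) (w : σ → ℕ) (hw : ∀ a, w a < w (φ a)) {p : ℕ} (hp : 2 ≤ p)
    (lt : σ → σ → Prop) [Std.Irrefl lt] : IsRegularSeq lt (powerRelation k φ p) := by
  refine ⟨?_, fun α h hmem => ?_⟩
  · rw [← Set.image_univ, ← ker_descentMap (p := p) (hw := hw) _ hφ]
    exact RingHom.ker_ne_top _
  · rw [← ker_descentMap (hw := hw) _ hφ, RingHom.mem_ker] at hmem ⊢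
    rw [map_mul] at hmem
    exact (mul_eq_zero.1 hmem).resolve_right
      (descentMap_powerRelation_ne_zero _ hφ hp (irrefl α))

section DescentExponent

variable {σ : Type*} {φ : σ → σ} (p : ℕ) (w : σ → ℕ) (hw : ∀ a, w a < w (φ a))

/-- The exponent vector of `descentMap k p w hw S (monomial m c)`. -/
def descentExp (S : Set σ) : (σ →₀ ℕ) →+ (σ →₀ ℕ) :=
  Finsupp.liftAddHom fun i => (Finsupp.singleAddHom (descend φ w hw S i).1).comp
    (AddMonoidHom.mulLeft (p ^ (descend φ w hw S i).2))

variable {p w hw} (S : Set σ)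

theorem descentExp_single (i : σ) (c : ℕ) :
    descentExp p w hw S (Finsupp.single i c) =
      Finsupp.single (descend φ w hw S i).1 (p ^ (descend φ w hw S i).2 * c) :=
  Finsupp.liftAddHom_apply_single _ _ _

theorem descentMap_monomial {k : Type*} [CommSemiring k] (m : σ →₀ ℕ) (c : k) :
    descentMap k p w hw S (monomial m c) = monomial (descentExp p w hw S m) c := by
  rw [descentMap, aeval_monomial, descentExp, Finsupp.liftAddHom_apply,
    monomial_finsupp_sum_index, algebraMap_eq]
  congr 1
  refine Finset.prod_congr rfl fun i _ => ?_
  beta_reduce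
  rw [← pow_mul, X_pow_eq_monomial]
  rfl

theorem descentExp_apply [DecidableEq σ] {m : σ →₀ ℕ} {s : Finset σ} (hs : m.support ⊆ s) (β : σ) :
    descentExp p w hw S m β =
      ∑ i ∈ s with (descend φ w hw S i).1 = β, p ^ (descend φ w hw S i).2 * m i := by
  rw [descentExp, Finsupp.liftAddHom_apply, Finsupp.sum_of_support_subset m hs _ (by simp),
    Finsupp.finsetSum_apply, Finset.sum_filter]
  exact Finset.sum_congr rfl fun i _ => Finsupp.single_apply

theorem eq_of_descentExp_eq {m m' : σ →₀ ℕ} (hm : ∀ i, m i < p) (hm' : ∀ i, m' i < p)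
    (h : descentExp p w hw S m = descentExp p w hw S m') : m = m' := by
  classical
  ext i
  set s := insert i (m.support ∪ m'.support)
  have hinj : Set.InjOn (fun j => (descend φ w hw S j).2)
      ↑(s.filter fun j => (descend φ w hw S j).1 = (descend φ w hw S i).1) :=
    fun x hx y hy hxy => descend_injective S
      (Prod.ext ((Finset.mem_filter.1 hx).2.trans (Finset.mem_filter.1 hy).2.symm) hxy)
  have hβ := DFunLike.congr_fun h (descend φ w hw S i).1
  rw [descentExp_apply S (s := s) (by intro j; simp +contextual [s]),
    descentExp_apply S (s := s) (by intro j; simp +contextual [s])] at hβ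
  exact Finset.eq_of_sum_pow_mul_eq _ hinj (fun j _ => hm j) (fun j _ => hm' j) hβ i (by simp [s])

theorem descentExp_sub_single_add_single (hφ : Function.Injective φ) {i : σ} (hi : i ∈ S)
    {m : σ →₀ ℕ} (hle : Finsupp.single i p ≤ m) :
    descentExp p w hw S (m - Finsupp.single i p + Finsupp.single (φ i) 1) =
      descentExp p w hw S m := by
  conv_rhs => rw [← tsub_add_cancel_of_le hle]
  rw [map_add, map_add, descentExp_single, descentExp_single, descend_apply_of_mem S hφ hi,
    pow_succ, mul_one]

end DescentExponent

section GroebnerBasis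

variable {k σ : Type*} {φ : σ → σ} {p : ℕ} {r : (σ →₀ ℕ) → (σ →₀ ℕ) → Prop}

theorem eq_or_lt_of_descentExp_eq (hφ : Function.Injective φ) (w : σ → ℕ)
    (hw : ∀ a, w a < w (φ a)) (hr : IsMonomialOrder r)
    (hlm : ∀ i, r (Finsupp.single (φ i) 1) (Finsupp.single i p)) {m m' : σ →₀ ℕ}
    (hm : ∀ i, m i < p) (h : descentExp p w hw Set.univ m' = descentExp p w hw Set.univ m) :
    m' = m ∨ r m m' := by
  have := hr.1
  obtain ⟨n, hn, hmin⟩ := hr.1.wf.has_min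
    {n | descentExp p w hw Set.univ n = descentExp p w hw Set.univ m} ⟨m', h⟩
  -- otherwise trading some `x_i ^ p` for `x_{φ i}` would give a smaller exponent in the fibre
  have hred : ∀ i, n i < p := by
    by_contra! ⟨i, hi⟩
    have hle : Finsupp.single i p ≤ n := Finsupp.single_le_iff.2 hi
    refine hmin _ ((descentExp_sub_single_add_single _ hφ (Set.mem_univ i) hle).trans hn) ?_
    have := hr.2 _ _ (n - Finsupp.single i p) (hlm i)
    rwa [tsub_add_cancel_of_le hle] at this
  obtain rfl := eq_of_descentExp_eq _ hred hm hn
  rcases trichotomous_of r m' n with hlt | heq | hgt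
  exacts [(hmin m' h hlt).elim, Or.inl heq, Or.inr hgt]

theorem exists_le_apply_of_isLM [CommRing k] (hφ : Function.Injective φ) (w : σ → ℕ)
    (hw : ∀ a, w a < w (φ a)) (hr : IsMonomialOrder r)
    (hlm : ∀ i, r (Finsupp.single (φ i) 1) (Finsupp.single i p)) {f : MvPolynomial σ k}
    (hf : f ∈ Ideal.span (Set.range (powerRelation k φ p))) {m : σ →₀ ℕ} (hm : IsLM r f m) :
    ∃ i, p ≤ m i := by
  classical
  have := hr.1
  by_contra! hred
  have hf0 : descentMap k p w hw Set.univ f = 0 := by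
    rwa [← RingHom.mem_ker, ker_descentMap _ hφ, Set.image_univ]
  have hcoeff : coeff (descentExp p w hw Set.univ m) (descentMap k p w hw Set.univ f) =
      coeff m f := by
    conv_lhs => rw [f.as_sum]
    rw [map_sum, coeff_sum]
    refine (Finset.sum_eq_single m (fun m' hm' hne => ?_) (fun h => (h hm.1).elim)).trans ?_
    · rw [descentMap_monomial, coeff_monomial, if_neg]
      intro hD
      rcases eq_or_lt_of_descentExp_eq hφ w hw hr hlm hred hD with h | h
      exacts [hne h, asymm h (hm.2 m' hm' hne)]
    · rw [descentMap_monomial, coeff_monomial, if_pos rfl]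
  exact mem_support_iff.1 hm.1 (hcoeff.symm.trans (by rw [hf0, coeff_zero]))

theorem isReducedGB_powerRelation [Field k] (hφ : Function.Injective φ) (w : σ → ℕ)
    (hw : ∀ a, w a < w (φ a)) (hp : 2 ≤ p) (hr : IsMonomialOrder r)
    (hlm : ∀ i, r (Finsupp.single (φ i) 1) (Finsupp.single i p)) :
    IsReducedGB r (Set.range (powerRelation k φ p))
      (Ideal.span (Set.range (powerRelation k φ p))) := by
  have := hr.1
  have hLM i : IsLM r (powerRelation k φ p i) (Finsupp.single i p) := isLM_X_pow_sub_X (hlm i)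
  refine ⟨isGroebnerBasis_of_forall_isLM_le Ideal.subset_span fun f hf m hm => ?_, ?_, ?_⟩
  · obtain ⟨i, hi⟩ := exists_le_apply_of_isLM hφ w hw hr hlm hf hm
    exact ⟨_, ⟨i, rfl⟩, _, hLM i, Finsupp.single_le_iff.2 hi⟩
  · rintro _ ⟨i, rfl⟩
    exact ⟨_, hLM i, coeff_X_pow_sub_X fun he => irrefl _ (he ▸ hlm i)⟩
  · rintro _ ⟨i, rfl⟩ _ ⟨j, rfl⟩ hne m hm m' hm' hle
    obtain rfl := hm.unique (hLM i)
    have hij : i ≠ j := fun h => hne (h ▸ rfl)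
    have hpi := Finsupp.single_le_iff.1 hle
    rcases mem_support_X_pow_sub_X hm' with rfl | rfl
    · rw [Finsupp.single_eq_of_ne hij] at hpi
      omega
    · classical
      rw [Finsupp.single_apply] at hpi
      split_ifs at hpi <;> omega

end GroebnerBasis

theorem power_relations_reducedGB_general {k : Type*} [Field k]
    (W : Set ℕ) (hW : ∀ w ∈ W, 0 < w)
    (p : ℕ) (hp : 2 ≤ p)
    (r : (↥W →₀ ℕ) → (↥W →₀ ℕ) → Prop) (hr : IsMonomialOrder r)
    (g : ↥W → MvPolynomial ↥W k)
    (hg : ∀ i : ↥W, ∃ hpi : (p * ↑i : ℕ) ∈ W,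
      g i = X i ^ p - X (⟨p * ↑i, hpi⟩ : ↥W))
    (hlm : ∀ (i : ↥W) (hpi : (p * ↑i : ℕ) ∈ W),
      r (Finsupp.single (⟨p * ↑i, hpi⟩ : ↥W) 1) (Finsupp.single i p)) :
    (∀ i : ↥W, (g i).IsWeightedHomogeneous (fun j : ↥W => (j : ℕ)) (p * ↑i)) ∧
    (∀ lt : ↥W → ↥W → Prop, IsWellOrder ↥W lt → IsRegularSeq lt g) ∧
    IsReducedGB r (Set.range g) (Ideal.span (Set.range g)) := by
  set φ : W → W := fun i => ⟨p * i, (hg i).1⟩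
  have hφ : Function.Injective φ := fun a b h =>
    Subtype.ext (Nat.eq_of_mul_eq_mul_left (by omega) (congrArg Subtype.val h))
  have hw (a : W) : (a : ℕ) < φ a := by
    have := hW a a.2
    change (a : ℕ) < p * a
    nlinarith
  rw [show g = powerRelation k φ p from funext fun i => (hg i).2]
  refine ⟨fun i => ?_, fun lt _ => isRegularSeq_powerRelation hφ _ hw hp lt,
    isReducedGB_powerRelation hφ _ hw hp hr fun i => hlm i _⟩
  have := ((isWeightedHomogeneous_X k (fun j : W => (j : ℕ)) i).pow p).sub
    (isWeightedHomogeneous_X k _ (φ i))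
  rwa [smul_eq_mul] at this

/-- Theorem 2.1 (first half): let `W ⊆ ℕ_{>0}` with `pW ⊆ W` for an integer `p ≥ 2`, let
`R = k[x_i : i ∈ W]` graded by `deg x_i = i`, and let the monomial order be such that the
leading monomial of `x_i^p − x_{pi}` is `x_i^p`.  Then `G = {x_i^p − x_{pi} : i ∈ W}` is a
homogeneous regular sequence on `R` (for any well-ordering of `W`) and a reduced Gröbner
base for the ideal it generates. -/
theorem power_relations_reducedGB {k : Type*} [Field k]
    (W : Set ℕ) (hW : ∀ w ∈ W, 0 < w)
    (p : ℕ) (hp : 2 ≤ p) (hpW : ∀ w ∈ W, p * w ∈ W)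
    (r : (↥W →₀ ℕ) → (↥W →₀ ℕ) → Prop) (hr : IsMonomialOrder r)
    (g : ↥W → MvPolynomial ↥W k)
    (hg : ∀ i : ↥W, ∃ hpi : (p * ↑i : ℕ) ∈ W,
      g i = X i ^ p - X (⟨p * ↑i, hpi⟩ : ↥W))
    (hlm : ∀ (i : ↥W) (hpi : (p * ↑i : ℕ) ∈ W),
      r (Finsupp.single (⟨p * ↑i, hpi⟩ : ↥W) 1) (Finsupp.single i p)) :
    (∀ i : ↥W, (g i).IsWeightedHomogeneous (fun j : ↥W => (j : ℕ)) (p * ↑i)) ∧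
    (∀ lt : ↥W → ↥W → Prop, IsWellOrder ↥W lt → IsRegularSeq lt g) ∧
    IsReducedGB r (Set.range g) (Ideal.span (Set.range g)) :=
  power_relations_reducedGB_general W hW p hp r hr g hg hlm
end
end

section
/- Let W be a subset of the positive integers and p ≥ 2 an integer with pW ⊆ W. For each n ∈ ℕ, let X(n) be the set of partitions of n all of whose parts lie in W ∖ pW, and let Y(n) be the set of partitions of n all of whose parts lie in W and in which every number occurs as a part at most p − 1 times. Then for every n there is a bijection between X(n) and Y(n) (given by repeatedly replacing p equal parts i by the single part pi); in particular X(n) and Y(n) have the same cardinality. -/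
/-!
Every nonzero `w ∈ W` is uniquely `p ^ k * j` with `j ∈ W ∖ pW`, so a partition with parts in `W`
is a multiset of pairs `(j, k)`. Splitting each pair `(j, k)` into `p ^ k` copies of `j` is a
bijection from the multisets of pairs in which no pair occurs `p` times onto the multisets of
elements of `W ∖ pW`. It is injective because the number of copies of `j` produced has the
multiplicities of the pairs `(j, k)` as its base-`p` digits, and surjective because `p` equal pairs
`(j, k)` can be merged into one pair `(j, k + 1)` until no pair occurs `p` times. So `X(n)` and
`Y(n)` are both in bijection with the reduced multisets of pairs of weight `n`.
-/

open Set Multiset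

namespace Multiset

theorem exists_eq_replicate_zero_add_map_succ (E : Multiset ℕ) :
    ∃ E' : Multiset ℕ, E = replicate (E.count 0) 0 + E'.map Nat.succ := by
  induction E using Multiset.induction_on with
  | empty => exact ⟨0, by simp⟩
  | cons a E ih =>
    obtain ⟨E', hE'⟩ := ih
    rcases a with _ | a
    · exact ⟨E', by rw [count_cons_self, replicate_succ, cons_add, ← hE']⟩
    · refine ⟨a ::ₘ E', ?_⟩
      rw [count_cons_of_ne (Nat.succ_ne_zero a).symm, map_cons, add_cons, ← hE']

theorem exists_sum_map_pow_eq (p : ℕ) (E : Multiset ℕ) :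
    ∃ E' : Multiset ℕ, (∀ i, E'.count i = E.count (i + 1)) ∧
      (E.map (p ^ ·)).sum = E.count 0 + p * (E'.map (p ^ ·)).sum := by
  obtain ⟨E', hE'⟩ := exists_eq_replicate_zero_add_map_succ E
  refine ⟨E', fun i => ?_, ?_⟩
  · rw [hE', count_add, count_replicate, if_neg (Nat.succ_ne_zero i).symm, zero_add,
      count_map_eq_count' _ _ Nat.succ_injective]
  · conv_lhs => rw [hE']
    simp [pow_succ', sum_map_mul_left]

theorem sum_map_pow_div_pow_mod {p : ℕ} {E : Multiset ℕ} (hE : ∀ i, E.count i < p) (k : ℕ) :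
    (E.map (p ^ ·)).sum / p ^ k % p = E.count k := by
  have hp : 0 < p := (Nat.zero_le _).trans_lt (hE 0)
  induction k generalizing E with
  | zero =>
    obtain ⟨_, -, hsum⟩ := exists_sum_map_pow_eq p E
    rw [pow_zero, Nat.div_one, hsum, Nat.add_mul_mod_self_left, Nat.mod_eq_of_lt (hE 0)]
  | succ k ih =>
    obtain ⟨E', hcount, hsum⟩ := exists_sum_map_pow_eq p E
    rw [pow_succ', ← Nat.div_div_eq_div_mul, hsum, Nat.add_mul_div_left _ _ hp,
      Nat.div_eq_of_lt (hE 0), zero_add, ← hcount]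
    exact ih fun i => hcount i ▸ hE _

section Map

variable {β γ : Type*} {f : β → γ} {s : Set β} {t : Set γ}

theorem exists_map_eq_of_surjOn (hf : SurjOn f s t) {v : Multiset γ} (hv : ∀ y ∈ v, y ∈ t) :
    ∃ u : Multiset β, (∀ x ∈ u, x ∈ s) ∧ u.map f = v := by
  induction v using Multiset.induction_on with
  | empty => exact ⟨0, by simp, rfl⟩
  | cons y v ih =>
    obtain ⟨x, hx, rfl⟩ := hf (hv y (mem_cons_self y v))
    obtain ⟨u, hu, rfl⟩ := ih fun z hz => hv z (mem_cons_of_mem hz)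
    exact ⟨x ::ₘ u, forall_mem_cons.2 ⟨hx, hu⟩, map_cons f x u⟩

variable [DecidableEq β] [DecidableEq γ]

theorem count_map_of_injOn (hf : InjOn f s) {u : Multiset β} (hu : ∀ x ∈ u, x ∈ s) {x : β}
    (hx : x ∈ s) : (u.map f).count (f x) = u.count x := by
  by_cases hxu : x ∈ u
  · exact count_map_eq_count f u (hf.mono hu) x hxu
  · rw [count_eq_zero_of_notMem hxu, count_eq_zero, mem_map]
    rintro ⟨y, hy, hfy⟩
    exact hxu (hf (hu y hy) hx hfy ▸ hy)

theorem injOn_map (hf : InjOn f s) : InjOn (map f) {u : Multiset β | ∀ x ∈ u, x ∈ s} := by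
  intro u hu v hv h
  ext x
  by_cases hx : x ∈ s
  · rw [← count_map_of_injOn hf hu hx, ← count_map_of_injOn hf hv hx, h]
  · rw [count_eq_zero_of_notMem fun h => hx (hu x h), count_eq_zero_of_notMem fun h => hx (hv x h)]

end Map

end Multiset

theorem Nat.Partition.nonempty_equiv_of_bijOn {β : Type*} {f : Multiset β → Multiset ℕ}
    {s : Set (Multiset β)} {B : Multiset ℕ → Prop} (hf : BijOn f s {v | (∀ i ∈ v, 0 < i) ∧ B v})
    (n : ℕ) : Nonempty ({u // u ∈ s ∧ (f u).sum = n} ≃ {P : n.Partition // B P.parts}) := by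
  refine ⟨Equiv.ofBijective
    (fun u => ⟨⟨f u.1, fun hi => (hf.mapsTo u.2.1).1 _ hi, u.2.2⟩, (hf.mapsTo u.2.1).2⟩)
    ⟨fun u v h => ?_, fun P => ?_⟩⟩
  · exact Subtype.ext (hf.injOn u.2.1 v.2.1 (congrArg (fun P => P.1.parts) h))
  · obtain ⟨u, hu, hfu⟩ := hf.surjOn ⟨fun _ hi => P.1.parts_pos hi, P.2⟩
    exact ⟨⟨u, hu, hfu ▸ P.1.parts_sum⟩, Subtype.ext (Nat.Partition.ext hfu)⟩

namespace Glaisher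

section Expand

variable {α : Type*} (p : ℕ)

def Reduced [DecidableEq α] (t : Multiset α) : Prop := ∀ x, t.count x < p

def expand (t : Multiset (α × ℕ)) : Multiset α := t.bind fun x => replicate (p ^ x.2) x.1

variable {p}

@[simp] theorem expand_cons (x : α × ℕ) (t : Multiset (α × ℕ)) :
    expand p (x ::ₘ t) = replicate (p ^ x.2) x.1 + expand p t := cons_bind _ _ _

@[simp] theorem expand_add (t u : Multiset (α × ℕ)) :
    expand p (t + u) = expand p t + expand p u :=
  add_bind _ _ _

@[simp] theorem expand_replicate (n : ℕ) (x : α × ℕ) :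
    expand p (replicate n x) = replicate (n * p ^ x.2) x.1 := by
  induction n with
  | zero => simp [expand]
  | succ n ih => rw [replicate_succ, expand_cons, ih, add_mul, one_mul, add_comm, replicate_add]

theorem expand_map_zero (s : Multiset α) : expand p (s.map (·, 0)) = s := by
  simpa [expand, bind_map, replicate_one] using bind_singleton (s := s) id

theorem mem_expand (hp : p ≠ 0) {a : α} {t : Multiset (α × ℕ)} :
    a ∈ expand p t ↔ ∃ k, (a, k) ∈ t := by
  simp [expand, mem_bind, mem_replicate, hp]

theorem count_expand [DecidableEq α] (t : Multiset (α × ℕ)) (a : α) :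
    (expand p t).count a = (((t.filter (·.1 = a)).map Prod.snd).map (p ^ ·)).sum := by
  induction t using Multiset.induction_on with
  | empty => simp [expand]
  | cons x t ih =>
    rw [expand_cons, count_add, ih, count_replicate]
    by_cases h : x.1 = a <;> simp [h]

theorem count_map_snd_filter [DecidableEq α] (t : Multiset (α × ℕ)) (a : α) (k : ℕ) :
    ((t.filter (·.1 = a)).map Prod.snd).count k = t.count (a, k) := by
  induction t using Multiset.induction_on with
  | empty => simp
  | cons x t ih =>
    obtain ⟨b, j⟩ := x
    rcases eq_or_ne b a with rfl | h
    · simp [ih, count_cons]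
    · simp [h, h.symm, ih]

theorem sum_expand (t : Multiset (ℕ × ℕ)) :
    (expand p t).sum = (t.map fun x => p ^ x.2 * x.1).sum := by
  simp [expand, sum_bind]

end Expand

section Bijection

variable {α : Type*} [DecidableEq α] {p : ℕ}

theorem count_eq_of_reduced {t : Multiset (α × ℕ)} (ht : Reduced p t) (a : α) (k : ℕ) :
    t.count (a, k) = (expand p t).count a / p ^ k % p := by
  rw [count_expand, sum_map_pow_div_pow_mod, count_map_snd_filter]
  intro i
  rw [count_map_snd_filter]
  exact ht _

theorem injOn_expand : InjOn (expand p) {t : Multiset (α × ℕ) | Reduced p t} :=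
  fun t ht u hu h => Multiset.ext.2 fun ⟨a, k⟩ => by
    rw [count_eq_of_reduced ht, count_eq_of_reduced hu, h]

theorem exists_reduced_expand_eq (hp : 2 ≤ p) (t : Multiset (α × ℕ)) :
    ∃ u, Reduced p u ∧ expand p u = expand p t := by
  induction hn : card t using Nat.strong_induction_on generalizing t with
  | _ n ih =>
    by_cases ht : Reduced p t
    · exact ⟨t, ht, rfl⟩
    obtain ⟨⟨a, k⟩, hx⟩ := not_forall.1 ht
    obtain ⟨r, rfl⟩ := _root_.le_iff_exists_add.1 (le_count_iff_replicate_le.1 (not_lt.1 hx))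
    obtain ⟨u, hu, hexp⟩ := ih _ (by simp [← hn]; omega) ((a, k + 1) ::ₘ r) rfl
    refine ⟨u, hu, hexp.trans ?_⟩
    simp [pow_succ']

theorem bijOn_expand (hp : 2 ≤ p) (s : Set α) :
    BijOn (expand p) {t | (∀ x ∈ t, x.1 ∈ s) ∧ Reduced p t} {u | ∀ a ∈ u, a ∈ s} := by
  have hp0 : p ≠ 0 := by omega
  refine ⟨fun t ht a ha => ?_, injOn_expand.mono fun t ht => ht.2, fun u hu => ?_⟩
  · obtain ⟨k, hk⟩ := (mem_expand hp0).1 ha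
    exact ht.1 _ hk
  · obtain ⟨t, ht, hexp⟩ := exists_reduced_expand_eq hp (u.map (·, 0))
    rw [expand_map_zero] at hexp
    refine ⟨t, ⟨fun x hx => hu _ ?_, ht⟩, hexp⟩
    rw [← hexp, mem_expand hp0]
    exact ⟨x.2, hx⟩

theorem bijOn_map_reduced {β γ : Type*} [DecidableEq β] [DecidableEq γ] {f : β → γ} {s : Set β}
    {t : Set γ} (hp : 0 < p) (hf : BijOn f s t) :
    BijOn (map f) {u | (∀ x ∈ u, x ∈ s) ∧ Reduced p u} {v | (∀ y ∈ v, y ∈ t) ∧ Reduced p v} := by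
  refine ⟨fun u hu => ⟨?_, fun y => ?_⟩, (injOn_map hf.injOn).mono fun u hu => hu.1,
    fun v hv => ?_⟩
  · simp only [mem_map]
    rintro _ ⟨x, hx, rfl⟩
    exact hf.mapsTo (hu.1 x hx)
  · by_cases hy : y ∈ u.map f
    · obtain ⟨x, hx, rfl⟩ := mem_map.1 hy
      rw [count_map_of_injOn hf.injOn hu.1 (hu.1 x hx)]
      exact hu.2 x
    · rwa [count_eq_zero_of_notMem hy]
  · obtain ⟨u, hu, rfl⟩ := exists_map_eq_of_surjOn hf.surjOn hv.1
    refine ⟨u, ⟨hu, fun x => ?_⟩, rfl⟩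
    by_cases hx : x ∈ u
    · rw [← count_map_of_injOn hf.injOn hu (hu x hx)]
      exact hv.2 _
    · rwa [count_eq_zero_of_notMem hx]

end Bijection

section Primitives

variable {W : Set ℕ} {p : ℕ}

variable (W p) in
def primitives : Set ℕ := {j | j ∈ W ∧ ¬∃ w ∈ W, j = p * w}

theorem ne_zero_of_mem_primitives {j : ℕ} (hj : j ∈ primitives W p) : j ≠ 0 := by
  rintro rfl
  exact hj.2 ⟨0, hj.1, (mul_zero p).symm⟩

theorem pow_mul_mem (hpW : ∀ w ∈ W, p * w ∈ W) {j : ℕ} (hj : j ∈ W) (k : ℕ) :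
    p ^ k * j ∈ W := by
  induction k with
  | zero => simpa using hj
  | succ k ih => simpa [pow_succ', mul_assoc] using hpW _ ih

theorem exists_mem_primitives_pow_mul_eq (hp : 2 ≤ p) {w : ℕ} (hw : w ∈ W) (hw0 : w ≠ 0) :
    ∃ j ∈ primitives W p, ∃ k, p ^ k * j = w := by
  induction w using Nat.strong_induction_on with
  | _ w ih =>
    by_cases hdiv : ∃ u ∈ W, w = p * u
    · obtain ⟨u, hu, rfl⟩ := hdiv
      have hu0 : u ≠ 0 := by rintro rfl; simp at hw0
      obtain ⟨j, hj, k, rfl⟩ :=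
        ih u (lt_mul_of_one_lt_left (Nat.pos_of_ne_zero hu0) (by omega)) hu hu0
      exact ⟨j, hj, k + 1, by rw [pow_succ', mul_assoc]⟩
    · exact ⟨w, ⟨hw, hdiv⟩, 0, by simp⟩

theorem pow_mul_inj_of_mem_primitives (hp : p ≠ 0) (hpW : ∀ w ∈ W, p * w ∈ W) {j j' k k' : ℕ}
    (hj : j ∈ primitives W p) (hj' : j' ∈ primitives W p) (h : p ^ k * j = p ^ k' * j') :
    j = j' ∧ k = k' := by
  wlog hkk : k ≤ k' generalizing j j' k k'
  · exact (this hj' hj h.symm (by omega)).imp Eq.symm Eq.symm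
  obtain ⟨d, rfl⟩ := Nat.exists_eq_add_of_le hkk
  rw [pow_add, mul_assoc] at h
  have h := Nat.eq_of_mul_eq_mul_left (pow_pos (Nat.pos_of_ne_zero hp) k) h
  cases d with
  | zero => simpa using h
  | succ d =>
    exact (hj.2 ⟨p ^ d * j', pow_mul_mem hpW hj'.1 d, by rw [h, pow_succ', mul_assoc]⟩).elim

theorem bijOn_pow_mul (hp : 2 ≤ p) (hpW : ∀ w ∈ W, p * w ∈ W) :
    BijOn (fun x : ℕ × ℕ => p ^ x.2 * x.1) {x | x.1 ∈ primitives W p} (W \ {0}) := by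
  refine ⟨fun x hx => ⟨pow_mul_mem hpW hx.1 _, ?_⟩, fun x hx y hy h => ?_, fun w hw => ?_⟩
  · exact mul_ne_zero (pow_ne_zero _ (by omega)) (ne_zero_of_mem_primitives hx)
  · obtain ⟨h1, h2⟩ := pow_mul_inj_of_mem_primitives (by omega) hpW hx hy h
    exact Prod.ext h1 h2
  · obtain ⟨j, hj, k, rfl⟩ := exists_mem_primitives_pow_mul_eq hp hw.1 hw.2
    exact ⟨(j, k), hj, rfl⟩

theorem bijOn_expand_primitives (hp : 2 ≤ p) :
    BijOn (expand p) {t : Multiset (ℕ × ℕ) | (∀ x ∈ t, x.1 ∈ primitives W p) ∧ Reduced p t}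
      {v | (∀ i ∈ v, 0 < i) ∧ ∀ i ∈ v, i ∈ W ∧ ¬∃ w ∈ W, i = p * w} := by
  convert bijOn_expand hp (primitives W p) using 1
  ext v
  exact ⟨fun h => h.2,
    fun h => ⟨fun i hi => Nat.pos_of_ne_zero (ne_zero_of_mem_primitives (h i hi)), h⟩⟩

theorem bijOn_map_pow_mul (hp : 2 ≤ p) (hpW : ∀ w ∈ W, p * w ∈ W) :
    BijOn (map fun x : ℕ × ℕ => p ^ x.2 * x.1)
      {t : Multiset (ℕ × ℕ) | (∀ x ∈ t, x.1 ∈ primitives W p) ∧ Reduced p t}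
      {v | (∀ i ∈ v, 0 < i) ∧ (∀ i ∈ v, i ∈ W) ∧ ∀ i, v.count i ≤ p - 1} := by
  convert bijOn_map_reduced (p := p) (by omega) (bijOn_pow_mul hp hpW) using 1
  · rfl
  ext v
  simp only [Nat.pos_iff_ne_zero, mem_ofPred_eq, mem_sdiff, mem_singleton_iff, forall_and,
    Reduced, Nat.lt_iff_le_pred (by omega : 0 < p)]
  tauto

end Primitives

end Glaisher

theorem partition_bijection_general (W : Set ℕ)
    (p : ℕ) (hp : 2 ≤ p) (hpW : ∀ w ∈ W, p * w ∈ W) (n : ℕ) :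
    Nonempty
      ({P : n.Partition // ∀ i ∈ P.parts, i ∈ W ∧ ¬∃ w ∈ W, i = p * w} ≃
        {P : n.Partition // (∀ i ∈ P.parts, i ∈ W) ∧
          ∀ i : ℕ, P.parts.count i ≤ p - 1}) := by
  obtain ⟨eX⟩ := Nat.Partition.nonempty_equiv_of_bijOn (Glaisher.bijOn_expand_primitives hp) n
  obtain ⟨eY⟩ := Nat.Partition.nonempty_equiv_of_bijOn (Glaisher.bijOn_map_pow_mul hp hpW) n
  exact ⟨eX.symm.trans ((Equiv.subtypeEquivRight fun t => by rw [Glaisher.sum_expand]).trans eY)⟩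

/-- Theorem 2.1 (second half): for `W ⊆ ℕ_{>0}` and `p ≥ 2` with `pW ⊆ W`, the set `X(n)`
of partitions of `n` with all parts in `W ∖ pW` is in bijection with the set `Y(n)` of
partitions of `n` with all parts in `W` in which every number occurs at most `p − 1`
times; in particular `X(n)` and `Y(n)` have the same cardinality. -/
theorem partition_bijection (W : Set ℕ) (hW : ∀ w ∈ W, 0 < w)
    (p : ℕ) (hp : 2 ≤ p) (hpW : ∀ w ∈ W, p * w ∈ W) (n : ℕ) :
    Nonempty
      ({P : n.Partition // ∀ i ∈ P.parts, i ∈ W ∧ ¬∃ w ∈ W, i = p * w} ≃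
        {P : n.Partition // (∀ i ∈ P.parts, i ∈ W) ∧
          ∀ i : ℕ, P.parts.count i ≤ p - 1}) :=
  partition_bijection_general W p hp hpW n
end
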